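/- arXiv:2010.00848 — 3 statements merged into one kernel-verified Lean document; each statement's English description precedes it below -/
import Mathlib

section
/- For the ℓ₀ 'norm' (cardinality of the support), the set of minimizers of y ↦ ‖y‖₀ + (1/(2γ))‖y−u‖₂² contains the point x given coordinatewise by xᵢ = 0 if |uᵢ| ≤ √(2γ) and xᵢ = uᵢ if |uᵢ| > √(2γ) (the hard-thresholding operator). -/
/-! Both terms of the objective split over the coordinates, so it suffices to minimise the scalar
cost `t ↦ [t ≠ 0] + (t - a)² / (2γ)`. Its value is `a² / (2γ)` at `t = 0` and at least `1` at any
`t ≠ 0`, with `1` attained at `t = a`; hard thresholding at `√(2γ)` picks whichever is smaller. -/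

open Finset

namespace HardThresholding

/-- The `i`-th summand of the objective, as a function of `t = y i` with `a = u i`. -/
noncomputable def l0Cost (γ a t : ℝ) : ℝ :=
  (if t ≠ 0 then 1 else 0) + 1 / (2 * γ) * (t - a) ^ 2

noncomputable def hardThreshold (τ a : ℝ) : ℝ :=
  if |a| ≤ τ then 0 else a

variable {γ : ℝ}

lemma min_le_l0Cost (hγ : 0 ≤ γ) (a t : ℝ) : min 1 (1 / (2 * γ) * a ^ 2) ≤ l0Cost γ a t := by
  unfold l0Cost
  by_cases ht : t = 0
  · simp [ht]
  · have : 0 ≤ 1 / (2 * γ) * (t - a) ^ 2 := by positivity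
    rw [if_pos ht]
    exact (min_le_left _ _).trans (le_add_of_nonneg_right this)

lemma l0Cost_hardThreshold (hγ : 0 < γ) (a : ℝ) :
    l0Cost γ a (hardThreshold √(2 * γ) a) = min 1 (1 / (2 * γ) * a ^ 2) := by
  have h2γ : 0 < 2 * γ := by positivity
  have abs_le_iff : |a| ≤ √(2 * γ) ↔ 1 / (2 * γ) * a ^ 2 ≤ 1 := by
    rw [Real.le_sqrt (abs_nonneg a) h2γ.le, sq_abs, one_div_mul_eq_div, div_le_one h2γ]
  unfold l0Cost hardThreshold
  by_cases h : |a| ≤ √(2 * γ)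
  · rw [if_pos h, min_eq_right (abs_le_iff.mp h)]
    simp
  · have ha : a ≠ 0 := by
      rintro rfl
      exact h (by simp)
    rw [if_neg h, min_eq_left (le_of_not_ge (mt abs_le_iff.mpr h))]
    simp [ha]

lemma l0Cost_hardThreshold_le (hγ : 0 < γ) (a t : ℝ) :
    l0Cost γ a (hardThreshold √(2 * γ) a) ≤ l0Cost γ a t :=
  (l0Cost_hardThreshold hγ a).trans_le (min_le_l0Cost hγ.le a t)

lemma card_support_add_sum_sq_eq_sum_l0Cost {ι : Type*} [Fintype ι] (γ : ℝ) (u y : ι → ℝ) :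
    (#{i | y i ≠ 0} : ℝ) + 1 / (2 * γ) * ∑ i, (y i - u i) ^ 2 = ∑ i, l0Cost γ (u i) (y i) := by
  rw [natCast_card_filter, mul_sum, ← sum_add_distrib]
  rfl

end HardThresholding

open HardThresholding

open Classical in
/-- the hard-thresholding point `x` (with `x i = 0` if
`|u i| ≤ √(2γ)` and `x i = u i` otherwise) is a minimizer of
`y ↦ ‖y‖₀ + (1/(2γ))‖y−u‖₂²`, where `‖y‖₀` counts nonzero coordinates. -/
theorem hard_thresholding_mem_prox_l0
    (n : ℕ) (γ : ℝ) (hγ : 0 < γ) (u : Fin n → ℝ) :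
    let x : Fin n → ℝ := fun i => if |u i| ≤ Real.sqrt (2 * γ) then 0 else u i
    ∀ y : Fin n → ℝ,
      ((Finset.univ.filter fun i => x i ≠ 0).card : ℝ)
          + (1 / (2 * γ)) * ∑ i, (x i - u i) ^ 2
        ≤ ((Finset.univ.filter fun i => y i ≠ 0).card : ℝ)
          + (1 / (2 * γ)) * ∑ i, (y i - u i) ^ 2 := by
  intro x y
  rw [card_support_add_sum_sq_eq_sum_l0Cost, card_support_add_sum_sq_eq_sum_l0Cost]
  exact sum_le_sum fun i _ => l0Cost_hardThreshold_le hγ (u i) (y i)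
end

section
/- Enlarged identification: Let C = {M₁,…,M_p} be a finite collection of closed subsets of ℝⁿ, g proper convex lsc with single-valued prox, and suppose a sequence (u_k) converges to u* with x_k = prox_{γg}(u_k) and x* = prox_{γg}(u*). Then for every ε > 0 there exists K such that for all k > K and all i: S(x*)ᵢ ≤ S(x_k)ᵢ ≤ max{ S(prox_{γg}(u))ᵢ : ‖u − u*‖ ≤ ε }. -/
/-!
The proximal map of a proper convex function is Lipschitz: midpoint convexity gives quadratic
growth of the proximal objective around its minimiser, and adding the growth inequalities at
`v` and `w` bounds `‖prox v - prox w‖²` by `2 ‖prox v - prox w‖ ‖v - w‖`. Hence `x_k → x*`, and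
as each `Mᵢ` is closed, `x* ∉ Mᵢ` forces `x_k ∉ Mᵢ` eventually, which is the lower bound. The
upper bound holds as soon as `‖u_k - u*‖ ≤ ε`, since `u_k` itself then competes in the maximum.
-/

open Classical in
/-- The sparsity vector of `x` relative to the collection `M`:
`S x i = 0` if `x ∈ M i` and `1` otherwise. -/
noncomputable def sparsityVec {E : Type*} {p : ℕ} (M : Fin p → Set E)
    (x : E) (i : Fin p) : ℕ :=
  if x ∈ M i then 0 else 1

open Filter Topology

theorem norm_midpoint_sub_sq {E : Type*} [NormedAddCommGroup E] [InnerProductSpace ℝ E]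
    (x z v : E) :
    ‖midpoint ℝ x z - v‖ ^ 2 = ‖x - v‖ ^ 2 / 2 + ‖z - v‖ ^ 2 / 2 - ‖x - z‖ ^ 2 / 4 := by
  have := EuclideanGeometry.dist_sq_add_dist_sq_eq_two_mul_dist_midpoint_sq_add_half_dist_sq v x z
  simp only [dist_eq_norm, norm_sub_rev v] at this
  linarith

section Prox

variable {E : Type*} [NormedAddCommGroup E]

/-- With `c = 1 / (2γ)` this says `prx = prox_{γg}`. -/
def IsProximalMap (g : E → EReal) (c : ℝ) (prx : E → E) : Prop :=
  ∀ u y, g (prx u) + ((c * ‖prx u - u‖ ^ 2 : ℝ) : EReal) ≤ g y + ((c * ‖y - u‖ ^ 2 : ℝ) : EReal)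

variable {g : E → EReal} {c : ℝ} {prx : E → E}

namespace IsProximalMap

theorem exists_eq_coe (h : IsProximalMap g c prx) (hproper : ∃ x, g x ≠ ⊤)
    (hnobot : ∀ x, g x ≠ ⊥) (v : E) : ∃ a : ℝ, g (prx v) = a := by
  obtain ⟨x, hx⟩ := hproper
  have hne_top : g (prx v) ≠ ⊤ := by
    intro htop
    have hle := h v x
    rw [htop, EReal.top_add_of_ne_bot (EReal.coe_ne_bot _), top_le_iff] at hle
    exact (EReal.add_lt_top hx (EReal.coe_ne_top _)).ne hle
  exact ⟨_, (EReal.coe_toReal hne_top (hnobot _)).symm⟩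

theorem le_of_eq_coe (h : IsProximalMap g c prx) {v y : E} {a b : ℝ}
    (ha : g (prx v) = a) (hb : g y = b) :
    a + c * ‖prx v - v‖ ^ 2 ≤ b + c * ‖y - v‖ ^ 2 := by
  have hle := h v y
  rw [ha, hb] at hle
  exact_mod_cast hle

variable [InnerProductSpace ℝ E]

theorem quadratic_growth (h : IsProximalMap g c prx) (hnobot : ∀ x, g x ≠ ⊥)
    (hconv : ∀ x y : E, ∀ a b : ℝ, 0 ≤ a → 0 ≤ b → a + b = 1 →
      g (a • x + b • y) ≤ (a : EReal) * g x + (b : EReal) * g y)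
    {v z : E} {a b : ℝ} (ha : g (prx v) = a) (hb : g z = b) :
    a + c * ‖prx v - v‖ ^ 2 + c / 2 * ‖prx v - z‖ ^ 2 ≤ b + c * ‖z - v‖ ^ 2 := by
  have hm_eq : midpoint ℝ (prx v) z = (1 / 2 : ℝ) • prx v + (1 / 2 : ℝ) • z := by
    rw [midpoint_eq_smul_add, smul_add, invOf_eq_inv, one_div]
  set m := midpoint ℝ (prx v) z
  have hgm : g m ≤ ((a / 2 + b / 2 : ℝ) : EReal) :=
    calc g m ≤ ((1 / 2 : ℝ) : EReal) * a + ((1 / 2 : ℝ) : EReal) * b := by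
          rw [hm_eq, ← ha, ← hb]; exact hconv _ _ _ _ (by norm_num) (by norm_num) (by norm_num)
      _ = ((a / 2 + b / 2 : ℝ) : EReal) := by norm_cast; ring
  obtain ⟨gm, hgm_eq⟩ : ∃ gm : ℝ, g m = gm :=
    ⟨_, (EReal.coe_toReal (ne_top_of_le_ne_top (EReal.coe_ne_top _) hgm) (hnobot m)).symm⟩
  have hgm_le : gm ≤ a / 2 + b / 2 := by rwa [hgm_eq, EReal.coe_le_coe_iff] at hgm
  have hm := h.le_of_eq_coe ha hgm_eq
  rw [norm_midpoint_sub_sq] at hm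
  linarith

theorem lipschitzWith_two (h : IsProximalMap g c prx) (hc : 0 < c) (hproper : ∃ x, g x ≠ ⊤)
    (hnobot : ∀ x, g x ≠ ⊥)
    (hconv : ∀ x y : E, ∀ a b : ℝ, 0 ≤ a → 0 ≤ b → a + b = 1 →
      g (a • x + b • y) ≤ (a : EReal) * g x + (b : EReal) * g y) :
    LipschitzWith 2 prx := by
  refine LipschitzWith.of_dist_le_mul fun v w => ?_
  obtain ⟨a, ha⟩ := h.exists_eq_coe hproper hnobot v
  obtain ⟨b, hb⟩ := h.exists_eq_coe hproper hnobot w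
  have hv := h.quadratic_growth hnobot hconv ha hb
  have hw := h.quadratic_growth hnobot hconv hb ha
  set x := prx v
  set y := prx w
  have hpolar : ‖y - v‖ ^ 2 + ‖x - w‖ ^ 2 - ‖x - v‖ ^ 2 - ‖y - w‖ ^ 2 =
      2 * inner ℝ (x - y) (v - w) := by
    simp only [norm_sub_sq_real, inner_sub_left, inner_sub_right, real_inner_comm]
    ring
  have hsum : c * ‖x - y‖ ^ 2 ≤ c * (2 * inner ℝ (x - y) (v - w)) := by
    rw [← hpolar]
    rw [norm_sub_rev y x] at hw
    linear_combination hv + hw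
  have hsq : ‖x - y‖ * ‖x - y‖ ≤ ‖x - y‖ * (2 * ‖v - w‖) := by
    have hcs := real_inner_le_norm (x - y) (v - w)
    linarith [le_of_mul_le_mul_left hsum hc, sq (‖x - y‖)]
  rw [dist_eq_norm, dist_eq_norm, NNReal.coe_ofNat]
  rcases (norm_nonneg (x - y)).eq_or_lt with h0 | h0
  · rw [← h0]; positivity
  · exact le_of_mul_le_mul_left hsq h0

end IsProximalMap

end Prox

section Sparsity

variable {E : Type*} {p : ℕ} {M : Fin p → Set E}

theorem sparsityVec_le_one (x : E) (i : Fin p) : sparsityVec M x i ≤ 1 := by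
  unfold sparsityVec; split <;> simp

theorem sparsityVec_le_sSup {β : Type*} {f : β → E} {P : β → Prop} {v : β} (hv : P v)
    (i : Fin p) :
    sparsityVec M (f v) i ≤ sSup {m : ℕ | ∃ w, P w ∧ sparsityVec M (f w) i = m} :=
  le_csSup ⟨1, by rintro _ ⟨w, -, rfl⟩; exact sparsityVec_le_one _ i⟩ ⟨v, hv, rfl⟩

theorem eventually_sparsityVec_le [TopologicalSpace E] (hM : ∀ i, IsClosed (M i))
    {α : Type*} {l : Filter α} {x : α → E} {a : E} (hx : Tendsto x l (𝓝 a)) :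
    ∀ᶠ k in l, ∀ i, sparsityVec M a i ≤ sparsityVec M (x k) i := by
  rw [eventually_all]
  intro i
  by_cases ha : a ∈ M i
  · exact .of_forall fun k => by simp [sparsityVec, ha]
  · filter_upwards [hx ((hM i).isOpen_compl.mem_nhds ha)] with k hk
    simp [sparsityVec, ha, show x k ∉ M i from hk]

end Sparsity

theorem enlarged_identification_general
    (n p : ℕ) (M : Fin p → Set (EuclideanSpace ℝ (Fin n)))
    (hM : ∀ i, IsClosed (M i))
    (g : EuclideanSpace ℝ (Fin n) → EReal)
    (hproper : ∃ x, g x ≠ ⊤)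
    (hnobot : ∀ x, g x ≠ ⊥)
    (hconv : ∀ x y : EuclideanSpace ℝ (Fin n), ∀ a b : ℝ,
      0 ≤ a → 0 ≤ b → a + b = 1 →
      g (a • x + b • y) ≤ (a : EReal) * g x + (b : EReal) * g y)
    (γ : ℝ) (hγ : 0 < γ)
    (prx : EuclideanSpace ℝ (Fin n) → EuclideanSpace ℝ (Fin n))
    (hprx : ∀ u y : EuclideanSpace ℝ (Fin n),
      g (prx u) + (((1 / (2 * γ)) * ‖prx u - u‖ ^ 2 : ℝ) : EReal)
        ≤ g y + (((1 / (2 * γ)) * ‖y - u‖ ^ 2 : ℝ) : EReal))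
    (u : ℕ → EuclideanSpace ℝ (Fin n)) (ustar : EuclideanSpace ℝ (Fin n))
    (hu : Filter.Tendsto u Filter.atTop (nhds ustar)) :
    ∀ ε : ℝ, 0 < ε → ∃ K : ℕ, ∀ k > K, ∀ i : Fin p,
      sparsityVec M (prx ustar) i ≤ sparsityVec M (prx (u k)) i ∧
      sparsityVec M (prx (u k)) i ≤
        sSup {m : ℕ | ∃ v : EuclideanSpace ℝ (Fin n),
          ‖v - ustar‖ ≤ ε ∧ sparsityVec M (prx v) i = m} := by
  intro ε hε
  have hlip : LipschitzWith 2 prx :=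
    IsProximalMap.lipschitzWith_two hprx (by positivity) hproper hnobot hconv
  have hprox : Tendsto (prx ∘ u) atTop (𝓝 (prx ustar)) := (hlip.continuous.tendsto ustar).comp hu
  have hclose : ∀ᶠ k in atTop, ‖u k - ustar‖ ≤ ε := by
    filter_upwards [hu (Metric.closedBall_mem_nhds ustar hε)] with k hk
    exact mem_closedBall_iff_norm.mp hk
  obtain ⟨K, hK⟩ := eventually_atTop.mp ((eventually_sparsityVec_le hM hprox).and hclose)
  refine ⟨K, fun k hk i => ?_⟩
  obtain ⟨hlower, hk_close⟩ := hK k hk.le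
  exact ⟨hlower i, sparsityVec_le_sSup (P := (‖· - ustar‖ ≤ ε)) hk_close i⟩

/-- enlarged identification. With `M₁,…,M_p` closed, `g` proper
convex lsc, `prx` its (single-valued) proximal operator with parameter
`γ > 0`, `u_k → u*`, `x_k = prox_{γg}(u_k)` and `x* = prox_{γg}(u*)`: for
every `ε > 0` there is `K` such that for all `k > K` and all `i`,
`S(x*)ᵢ ≤ S(x_k)ᵢ ≤ max{ S(prox_{γg}(u))ᵢ : ‖u − u*‖ ≤ ε }`. -/
theorem enlarged_identification
    (n p : ℕ) (M : Fin p → Set (EuclideanSpace ℝ (Fin n)))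
    (hM : ∀ i, IsClosed (M i))
    (g : EuclideanSpace ℝ (Fin n) → EReal)
    (hproper : ∃ x, g x ≠ ⊤)
    (hnobot : ∀ x, g x ≠ ⊥)
    (hconv : ∀ x y : EuclideanSpace ℝ (Fin n), ∀ a b : ℝ,
      0 ≤ a → 0 ≤ b → a + b = 1 →
      g (a • x + b • y) ≤ (a : EReal) * g x + (b : EReal) * g y)
    (hlsc : LowerSemicontinuous g)
    (γ : ℝ) (hγ : 0 < γ)
    (prx : EuclideanSpace ℝ (Fin n) → EuclideanSpace ℝ (Fin n))
    (hprx : ∀ u y : EuclideanSpace ℝ (Fin n),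
      g (prx u) + (((1 / (2 * γ)) * ‖prx u - u‖ ^ 2 : ℝ) : EReal)
        ≤ g y + (((1 / (2 * γ)) * ‖y - u‖ ^ 2 : ℝ) : EReal))
    (u : ℕ → EuclideanSpace ℝ (Fin n)) (ustar : EuclideanSpace ℝ (Fin n))
    (hu : Filter.Tendsto u Filter.atTop (nhds ustar)) :
    ∀ ε : ℝ, 0 < ε → ∃ K : ℕ, ∀ k > K, ∀ i : Fin p,
      sparsityVec M (prx ustar) i ≤ sparsityVec M (prx (u k)) i ∧
      sparsityVec M (prx (u k)) i ≤
        sSup {m : ℕ | ∃ v : EuclideanSpace ℝ (Fin n),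
          ‖v - ustar‖ ≤ ε ∧ sparsityVec M (prx v) i = m} :=
  enlarged_identification_general n p M hM g hproper hnobot hconv γ hγ prx hprx u ustar hu
end

section
/- The proximal operator of the nuclear norm acts by soft-thresholding singular values: if U = V diag(σ) W* is a singular value decomposition of U, then X = V diag(ν) W* with νᵢ = max(σᵢ − γ, 0) minimizes X ↦ ‖X‖* + (1/(2γ))‖X − U‖_F² over matrices, where ‖X‖* is the sum of singular values. -/
open scoped BigOperators

/-- The rectangular "diagonal" matrix with diagonal entries `σ 0, σ 1, …`. -/
def rectDiag (r c : ℕ) (σ : ℕ → ℝ) : Matrix (Fin r) (Fin c) ℝ :=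
  Matrix.of fun i j => if (i : ℕ) = (j : ℕ) then σ (i : ℕ) else 0

/-
With `D := U - X = V diag(min(σ, γ)) Wᵀ`, expanding the square gives
`‖Y - U‖² ≥ ‖X - U‖² + 2⟨X, D⟩ - 2⟨Y, D⟩` for the Frobenius inner product `⟨P, Q⟩ = tr(PᵀQ)`,
so it suffices that `⟨X, D⟩ = γ‖X‖*` and `⟨Y, D⟩ ≤ γ‖Y‖*`. The first holds because `X` and `D`
share singular vectors and `νᵢ > 0` forces `min(σᵢ, γ) = γ`. For the second, write
`Y = A diag(τ) Bᵀ` (every real matrix has an SVD, which is how `‖Y‖*` is known); then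
`⟨Y, D⟩ = ∑ₖ τₖ (Aᵀ D B)ₖₖ`, and every entry of `Aᵀ D B` is at most `γ` because `D` has operator
norm at most `γ`.
-/

open Matrix

section

variable {r c : ℕ}

theorem rectDiag_transpose (d : ℕ → ℝ) : (rectDiag r c d)ᵀ = rectDiag c r d := by
  ext i j
  simp only [rectDiag, transpose_apply, of_apply, eq_comm (a := (i : ℕ))]
  split_ifs with h <;> simp [h]

theorem rectDiag_sub (f g : ℕ → ℝ) : rectDiag r c f - rectDiag r c g = rectDiag r c (f - g) := by
  ext i j
  simp only [rectDiag, Matrix.sub_apply, of_apply, Pi.sub_apply]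
  split_ifs <;> simp

theorem mul_rectDiag_apply {m : Type*} (hcr : c ≤ r) (M : Matrix m (Fin r) ℝ) (τ : ℕ → ℝ)
    (p : m) (j : Fin c) : (M * rectDiag r c τ) p j = M p (Fin.castLE hcr j) * τ j := by
  rw [mul_apply, Finset.sum_eq_single (Fin.castLE hcr j)]
  · simp [rectDiag]
  · intro a _ ha
    simp only [rectDiag, of_apply, mul_ite, mul_zero, ite_eq_right_iff]
    exact fun h => absurd (Fin.ext h) ha
  · simp

theorem sum_sum_rectDiag_mul (d : ℕ → ℝ) (F : Fin r → Fin c → ℝ) :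
    ∑ a, ∑ b, rectDiag r c d a b * F a b =
      ∑ k : Fin (min r c),
        d k * F (Fin.castLE (min_le_left r c) k) (Fin.castLE (min_le_right r c) k) := by
  rw [← Fintype.sum_prod_type']
  symm
  refine Fintype.sum_of_injective
    (fun k => (Fin.castLE (min_le_left r c) k, Fin.castLE (min_le_right r c) k)) ?_ _ _ ?_ ?_
  · intro k l h
    exact Fin.castLE_injective (min_le_left r c) (Prod.ext_iff.1 h).1
  · rintro ⟨a, b⟩ hab
    simp only [rectDiag, of_apply, ite_mul, zero_mul, ite_eq_right_iff]
    intro h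
    exact absurd ⟨⟨a, lt_min a.2 (h ▸ b.2)⟩, Prod.ext rfl (Fin.ext h)⟩ hab
  · intro k
    simp [rectDiag]

theorem exists_orthonormalBasis_norm_smul_eq {ι E : Type*} [Fintype ι] [NormedAddCommGroup E]
    [InnerProductSpace ℝ E] [FiniteDimensional ℝ E] (hcard : Module.finrank ℝ E = Fintype.card ι)
    {w : ι → E} (hw : Pairwise fun a b => inner ℝ (w a) (w b) = 0) :
    ∃ b : OrthonormalBasis ι ℝ E, ∀ a, w a = ‖w a‖ • b a := by
  classical
  let s : Set ι := {a | w a ≠ 0}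
  have hv : Orthonormal ℝ (s.domRestrict fun a => ‖w a‖⁻¹ • w a) := by
    rw [orthonormal_iff_ite]
    rintro ⟨a, ha⟩ ⟨b, hb⟩
    by_cases hab : a = b
    · subst hab
      simp only [Set.domRestrict_apply, if_pos, real_inner_self_eq_norm_sq, norm_smul, norm_inv,
        norm_norm, inv_mul_cancel₀ (norm_ne_zero_iff.mpr ha), one_pow]
    · simp [inner_smul_left, inner_smul_right, hw hab, hab]
  obtain ⟨b, hb⟩ := hv.exists_orthonormalBasis_extension_of_card_eq hcard
  refine ⟨b, fun a => ?_⟩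
  by_cases ha : w a = 0
  · simp [ha]
  · rw [hb a ha, smul_inv_smul₀ (norm_ne_zero_iff.mpr ha)]

theorem exists_orthogonal_mul_rectDiag_of_isDiag (hcr : c ≤ r) (C : Matrix (Fin r) (Fin c) ℝ)
    (hC : (Cᵀ * C).IsDiag) :
    ∃ (A : Matrix (Fin r) (Fin r) ℝ) (τ : ℕ → ℝ), Aᵀ * A = 1 ∧ (∀ n, 0 ≤ τ n) ∧
      C = A * rectDiag r c τ := by
  let col : Fin c → EuclideanSpace ℝ (Fin r) := fun j => WithLp.toLp 2 (Cᵀ j)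
  have hcol : Pairwise fun i j => inner ℝ (col i) (col j) = 0 := by
    intro i j hij
    simpa [col, PiLp.inner_apply, mul_apply, mul_comm] using hC hij.symm
  let e : Fin c → Fin r := Fin.castLE hcr
  let w : Fin r → EuclideanSpace ℝ (Fin r) := Function.extend e col 0
  have hw : ∀ j, w (e j) = col j := (Fin.castLE_injective hcr).extend_apply _ _
  have hworth : Pairwise fun a b => inner ℝ (w a) (w b) = 0 := by
    intro a b hab
    by_cases ha : ∃ i, e i = a
    · by_cases hb : ∃ j, e j = b
      · obtain ⟨i, rfl⟩ := ha
        obtain ⟨j, rfl⟩ := hb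
        rw [hw, hw]
        exact hcol fun h => hab (h ▸ rfl)
      · simp [w, Function.extend_apply' _ _ _ hb]
    · simp [w, Function.extend_apply' _ _ _ ha]
  obtain ⟨b, hb⟩ := exists_orthonormalBasis_norm_smul_eq (by simp) hworth
  let A := (EuclideanSpace.basisFun (Fin r) ℝ).toBasis.toMatrix b
  refine ⟨A, fun n => ‖Function.extend Fin.val col 0 n‖, ?_, fun n => norm_nonneg _, ?_⟩
  · simpa [conjTranspose_eq_transpose_of_trivial] using
      (EuclideanSpace.basisFun (Fin r) ℝ).toMatrix_orthonormalBasis_conjTranspose_mul_self b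
  ext p j
  rw [mul_rectDiag_apply hcr, Fin.val_injective.extend_apply, ← hw]
  calc C p j = (‖w (e j)‖ • b (e j)) p := by rw [← hb, hw]; rfl
    _ = A p (e j) * ‖w (e j)‖ := by simp [A, Module.Basis.toMatrix_apply, mul_comm]

theorem exists_svd_of_le (hcr : c ≤ r) (Y : Matrix (Fin r) (Fin c) ℝ) :
    ∃ (A : Matrix (Fin r) (Fin r) ℝ) (B : Matrix (Fin c) (Fin c) ℝ) (τ : ℕ → ℝ),
      A * Aᵀ = 1 ∧ Aᵀ * A = 1 ∧ B * Bᵀ = 1 ∧ Bᵀ * B = 1 ∧ (∀ n, 0 ≤ τ n) ∧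
      Y = A * rectDiag r c τ * Bᵀ := by
  have hH : (Yᵀ * Y).IsHermitian := by
    simpa [conjTranspose_eq_transpose_of_trivial] using isHermitian_conjTranspose_mul_self Y
  let B : Matrix (Fin c) (Fin c) ℝ := hH.eigenvectorUnitary
  have hBstar : star B = Bᵀ := conjTranspose_eq_transpose_of_trivial B
  have hBtB : Bᵀ * B = 1 := by
    rw [← hBstar]; exact Unitary.coe_star_mul_self hH.eigenvectorUnitary
  have hdiag : ((Y * B)ᵀ * (Y * B)).IsDiag := by
    have := hH.conjStarAlgAut_star_eigenvectorUnitary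
    rw [Unitary.conjStarAlgAut_star_apply] at this
    rw [transpose_mul, ← hBstar, Matrix.mul_assoc, ← Matrix.mul_assoc Yᵀ, ← Matrix.mul_assoc]
    exact this ▸ isDiag_diagonal _
  obtain ⟨A, τ, hAtA, hτ, hYB⟩ := exists_orthogonal_mul_rectDiag_of_isDiag hcr (Y * B) hdiag
  have hBBt : B * Bᵀ = 1 := mul_eq_one_comm.mp hBtB
  refine ⟨A, B, τ, mul_eq_one_comm.mp hAtA, hAtA, hBBt, hBtB, hτ, ?_⟩
  rw [← hYB, Matrix.mul_assoc, hBBt, Matrix.mul_one]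

theorem exists_svd (Y : Matrix (Fin r) (Fin c) ℝ) :
    ∃ (A : Matrix (Fin r) (Fin r) ℝ) (B : Matrix (Fin c) (Fin c) ℝ) (τ : ℕ → ℝ),
      A * Aᵀ = 1 ∧ Aᵀ * A = 1 ∧ B * Bᵀ = 1 ∧ Bᵀ * B = 1 ∧ (∀ n, 0 ≤ τ n) ∧
      Y = A * rectDiag r c τ * Bᵀ := by
  rcases le_total c r with hcr | hrc
  · exact exists_svd_of_le hcr Y
  · obtain ⟨A, B, τ, hAAt, hAtA, hBBt, hBtB, hτ, hY⟩ := exists_svd_of_le hrc Yᵀ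
    refine ⟨B, A, τ, hBBt, hBtB, hAAt, hAtA, hτ, ?_⟩
    rw [← transpose_transpose Y, hY, transpose_mul, transpose_mul, transpose_transpose,
      rectDiag_transpose, Matrix.mul_assoc]

theorem trace_transpose_mul_eq_sum {m n : Type*} [Fintype m] [Fintype n] (X Y : Matrix m n ℝ) :
    (Xᵀ * Y).trace = ∑ i, ∑ j, X i j * Y i j := by
  simp only [trace, diag, mul_apply, transpose_apply]
  exact Finset.sum_comm

theorem trace_rectDiag_transpose_mul (d : ℕ → ℝ) (M : Matrix (Fin r) (Fin c) ℝ) :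
    ((rectDiag r c d)ᵀ * M).trace =
      ∑ k : Fin (min r c),
        d k * M (Fin.castLE (min_le_left r c) k) (Fin.castLE (min_le_right r c) k) :=
  (trace_transpose_mul_eq_sum _ _).trans (sum_sum_rectDiag_mul d M)

theorem trace_transpose_mul_conj {l m n p : Type*} [Fintype l] [Fintype m] [Fintype n] [Fintype p]
    (A : Matrix l m ℝ) (M : Matrix m n ℝ) (B : Matrix p n ℝ) (Z : Matrix l p ℝ) :
    ((A * M * Bᵀ)ᵀ * Z).trace = (Mᵀ * (Aᵀ * Z * B)).trace := by
  rw [transpose_mul, transpose_mul, transpose_transpose, Matrix.mul_assoc, Matrix.mul_assoc,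
    trace_mul_comm, Matrix.mul_assoc, Matrix.mul_assoc]

theorem trace_transpose_mul_of_same_singular_vectors {V : Matrix (Fin r) (Fin r) ℝ}
    {W : Matrix (Fin c) (Fin c) ℝ} (hV : Vᵀ * V = 1) (hW : Wᵀ * W = 1) (f g : ℕ → ℝ) :
    ((V * rectDiag r c f * Wᵀ)ᵀ * (V * rectDiag r c g * Wᵀ)).trace =
      ∑ k : Fin (min r c), f k * g k := by
  have hconj : Vᵀ * (V * rectDiag r c g * Wᵀ) * W = rectDiag r c g := by
    simp only [Matrix.mul_assoc, hW, Matrix.mul_one]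
    simp only [← Matrix.mul_assoc, hV, Matrix.one_mul]
  rw [trace_transpose_mul_conj, hconj, trace_rectDiag_transpose_mul]
  simp [rectDiag]

theorem Fintype.sum_comp_le_sum_of_injective {ι κ : Type*} [Fintype ι] [Fintype κ] {e : ι → κ}
    (he : Function.Injective e) {f : κ → ℝ} (hf : ∀ k, 0 ≤ f k) : ∑ i, f (e i) ≤ ∑ k, f k :=
  calc ∑ i, f (e i) = ∑ k ∈ Finset.univ.map ⟨e, he⟩, f k :=
        (Finset.sum_map Finset.univ ⟨e, he⟩ f).symm
    _ ≤ ∑ k, f k := Finset.sum_le_univ_sum_of_nonneg hf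

theorem sum_sq_eq_one_of_mul_transpose_eq_one {m n : Type*} [Fintype m] [Fintype n] [DecidableEq m]
    {P : Matrix m n ℝ} (hP : P * Pᵀ = 1) (i : m) : ∑ a, P i a ^ 2 = 1 := by
  simpa [mul_apply, sq] using congrFun (congrFun hP i) i

theorem mul_rectDiag_mul_apply_le {m n : Type*} [Fintype m] [Fintype n] [DecidableEq m]
    [DecidableEq n] {d : ℕ → ℝ} {γ : ℝ} (hd : ∀ k, |d k| ≤ γ) {P : Matrix m (Fin r) ℝ}
    {Q : Matrix (Fin c) n ℝ} (hP : P * Pᵀ = 1) (hQ : Qᵀ * Q = 1) (i : m) (j : n) :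
    (P * rectDiag r c d * Q) i j ≤ γ := by
  set x : Fin (min r c) → ℝ := fun k => P i (Fin.castLE (min_le_left r c) k)
  set y : Fin (min r c) → ℝ := fun k => Q (Fin.castLE (min_le_right r c) k) j
  have hx : ∑ k, x k ^ 2 ≤ 1 := by
    rw [← sum_sq_eq_one_of_mul_transpose_eq_one hP i]
    exact Fintype.sum_comp_le_sum_of_injective (f := fun a => P i a ^ 2) (Fin.castLE_injective _)
      fun _ => sq_nonneg _
  have hy : ∑ k, y k ^ 2 ≤ 1 := by
    have hQ' : Qᵀ * Qᵀᵀ = 1 := by rwa [transpose_transpose]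
    rw [← sum_sq_eq_one_of_mul_transpose_eq_one hQ' j]
    exact Fintype.sum_comp_le_sum_of_injective (f := fun b => Q b j ^ 2) (Fin.castLE_injective _)
      fun _ => sq_nonneg _
  have hentry : (P * rectDiag r c d * Q) i j = ∑ k : Fin (min r c), d k * (x k * y k) := by
    calc (P * rectDiag r c d * Q) i j = ∑ a, ∑ b, rectDiag r c d a b * (P i a * Q b j) := by
          simp only [mul_apply, Finset.sum_mul]
          rw [Finset.sum_comm]
          exact Finset.sum_congr rfl fun a _ => Finset.sum_congr rfl fun b _ => by ring
      _ = _ := sum_sum_rectDiag_mul d _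
  have hγ : 0 ≤ γ := (abs_nonneg _).trans (hd 0)
  have hxy : ∀ k, |x k * y k| ≤ (x k ^ 2 + y k ^ 2) / 2 := fun k => by
    rw [abs_mul]
    nlinarith [two_mul_le_add_sq |x k| |y k|, sq_abs (x k), sq_abs (y k)]
  rw [hentry]
  calc ∑ k : Fin (min r c), d k * (x k * y k)
      ≤ ∑ k : Fin (min r c), γ * ((x k ^ 2 + y k ^ 2) / 2) := by
        refine Finset.sum_le_sum fun k _ => ?_
        calc d k * (x k * y k) ≤ |d k| * |x k * y k| := by rw [← abs_mul]; exact le_abs_self _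
          _ ≤ γ * ((x k ^ 2 + y k ^ 2) / 2) := by gcongr; exacts [hd k, hxy k]
    _ = γ * ((∑ k, x k ^ 2 + ∑ k, y k ^ 2) / 2) := by
        rw [← Finset.mul_sum, ← Finset.sum_div, Finset.sum_add_distrib]
    _ ≤ γ := by nlinarith

theorem trace_transpose_mul_le_of_abs_le {A V : Matrix (Fin r) (Fin r) ℝ}
    {B W : Matrix (Fin c) (Fin c) ℝ} (hA : Aᵀ * A = 1) (hV : V * Vᵀ = 1) (hB : Bᵀ * B = 1)
    (hW : W * Wᵀ = 1) {τ d : ℕ → ℝ} {γ : ℝ} (hτ : ∀ k, 0 ≤ τ k) (hd : ∀ k, |d k| ≤ γ) :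
    ((A * rectDiag r c τ * Bᵀ)ᵀ * (V * rectDiag r c d * Wᵀ)).trace ≤
      γ * ∑ k : Fin (min r c), τ k := by
  have hP : Aᵀ * V * (Aᵀ * V)ᵀ = 1 := by
    rw [transpose_mul, transpose_transpose, Matrix.mul_assoc, ← Matrix.mul_assoc V, hV,
      Matrix.one_mul, hA]
  have hQ : (Wᵀ * B)ᵀ * (Wᵀ * B) = 1 := by
    rw [transpose_mul, transpose_transpose, Matrix.mul_assoc, ← Matrix.mul_assoc W, hW,
      Matrix.one_mul, hB]
  rw [trace_transpose_mul_conj, trace_rectDiag_transpose_mul, Finset.mul_sum]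
  refine Finset.sum_le_sum fun k _ => ?_
  rw [mul_comm γ]
  refine mul_le_mul_of_nonneg_left ?_ (hτ k)
  simpa only [Matrix.mul_assoc] using mul_rectDiag_mul_apply_le hd hP hQ _ _

theorem sum_sq_sub_add_two_mul_trace_le {m n : Type*} [Fintype m] [Fintype n]
    (X U Y : Matrix m n ℝ) :
    ∑ i, ∑ j, (X i j - U i j) ^ 2 + 2 * ((Xᵀ * (U - X)).trace - (Yᵀ * (U - X)).trace) ≤
      ∑ i, ∑ j, (Y i j - U i j) ^ 2 := by
  simp only [trace_transpose_mul_eq_sum, Matrix.sub_apply, ← Finset.sum_sub_distrib,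
    Finset.mul_sum, ← Finset.sum_add_distrib]
  gcongr with i _ j _
  nlinarith [sq_nonneg (Y i j - X i j)]

end

/-- the proximal operator of the nuclear norm soft-thresholds
the singular values. Let `N` be the nuclear norm, i.e. any function whose
value at a matrix with SVD `V diag(σ) Wᵀ` (with `V, W` orthogonal and
`σ ≥ 0`) is `∑_{i < min(r,c)} σᵢ`. If `U = V diag(σ) Wᵀ` is an SVD of `U`,
then `X = V diag(ν) Wᵀ` with `νᵢ = max (σᵢ − γ) 0` minimizes
`Y ↦ N(Y) + (1/(2γ))‖Y − U‖_F²`. -/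
theorem prox_nuclear_norm_soft_thresholds_singular_values
    (r c : ℕ) (γ : ℝ) (hγ : 0 < γ)
    (N : Matrix (Fin r) (Fin c) ℝ → ℝ)
    (hN : ∀ (V' : Matrix (Fin r) (Fin r) ℝ) (W' : Matrix (Fin c) (Fin c) ℝ)
      (σ' : ℕ → ℝ),
      V' * V'.transpose = 1 → V'.transpose * V' = 1 →
      W' * W'.transpose = 1 → W'.transpose * W' = 1 →
      (∀ i, 0 ≤ σ' i) →
      N (V' * rectDiag r c σ' * W'.transpose) = ∑ i : Fin (min r c), σ' (i : ℕ))
    (U : Matrix (Fin r) (Fin c) ℝ)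
    (V : Matrix (Fin r) (Fin r) ℝ) (W : Matrix (Fin c) (Fin c) ℝ)
    (σ : ℕ → ℝ)
    (hV : V * V.transpose = 1) (hV' : V.transpose * V = 1)
    (hW : W * W.transpose = 1) (hW' : W.transpose * W = 1)
    (hσ : ∀ i, 0 ≤ σ i)
    (hU : U = V * rectDiag r c σ * W.transpose) :
    let ν : ℕ → ℝ := fun i => max (σ i - γ) 0
    let X : Matrix (Fin r) (Fin c) ℝ := V * rectDiag r c ν * W.transpose
    ∀ Y : Matrix (Fin r) (Fin c) ℝ,
      N X + (1 / (2 * γ)) * ∑ i, ∑ j, (X i j - U i j) ^ 2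
        ≤ N Y + (1 / (2 * γ)) * ∑ i, ∑ j, (Y i j - U i j) ^ 2 := by
  intro ν X Y
  obtain ⟨A, B, τ, hAAt, hAtA, hBBt, hBtB, hτ, hY⟩ := exists_svd Y
  let d : ℕ → ℝ := fun i => min (σ i) γ
  have hUX : U - X = V * rectDiag r c d * W.transpose := by
    rw [hU, ← Matrix.sub_mul, ← Matrix.mul_sub, rectDiag_sub]
    congr 3 with i
    rcases le_total (σ i) γ with h | h <;> simp [ν, d, h]
  have hXD : (Xᵀ * (U - X)).trace = γ * ∑ k : Fin (min r c), ν k := by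
    rw [hUX, trace_transpose_mul_of_same_singular_vectors hV' hW', Finset.mul_sum]
    refine Finset.sum_congr rfl fun k _ => ?_
    rcases le_total (σ k) γ with h | h <;> simp [ν, d, h, mul_comm]
  have hYD : (Yᵀ * (U - X)).trace ≤ γ * ∑ k : Fin (min r c), τ k := by
    rw [hUX, hY]
    exact trace_transpose_mul_le_of_abs_le hAtA hV hBtB hW hτ
      fun i => (abs_of_nonneg (le_min (hσ i) hγ.le)).trans_le (min_le_right _ _)
  have hNX : N X = ∑ k : Fin (min r c), ν k := hN V W ν hV hV' hW hW' fun i => le_max_right _ _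
  have hNY : N Y = ∑ k : Fin (min r c), τ k := hY ▸ hN A B τ hAAt hAtA hBBt hBtB hτ
  have hsq := sum_sq_sub_add_two_mul_trace_le X U Y
  rw [hNX, hNY, ← mul_le_mul_iff_right₀ (by positivity : (0 : ℝ) < 2 * γ)]
  field_simp
  linarith
end
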